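/- arXiv:1312.0914 — 6 statements merged into one kernel-verified Lean document; each statement's English description precedes it below -/
import Mathlib

section
/- For every (N, K_d, K) exact-repair regenerating code for (n,k,d)=(4,3,3), the code parameters satisfy K_d^4 · K^6 ≥ N^3 (equivalently, 4·log K_d + 6·log K ≥ 3·log N). -/
/-- An `(N, K_d, K)` exact-repair regenerating code for `(n,k,d) = (4,3,3)`:
encoding functions `f i : Fin N → Fin K_d`, repair-encoding functions
`F i j : Fin K_d → Fin K` (used for `i ≠ j`), and repair-decoding functions
`G j` taking the three repair messages from the helpers `i ≠ j`,
satisfying the reconstruction and repair conditions. -/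
structure ExactRepairCode433 (N Kd K : ℕ) where
  f : Fin 4 → Fin N → Fin Kd
  F : Fin 4 → Fin 4 → Fin Kd → Fin K
  G : (j : Fin 4) → ({i : Fin 4 // i ≠ j} → Fin K) → Fin Kd
  reconstruct : ∀ A : Finset (Fin 4), A.card = 3 →
    Function.Injective fun m : Fin N => fun i : A => f i m
  repair : ∀ (j : Fin 4) (m : Fin N),
    G j (fun i => F i.1 j (f i.1 m)) = f j m


open Finset

section EntLib
variable {N : ℕ}

def cnt {T : Type*} [DecidableEq T] (X : Fin N → T) (m : Fin N) : ℕ :=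
  (Finset.univ.filter (fun m' => X m' = X m)).card

noncomputable def ent {T : Type*} [DecidableEq T] (X : Fin N → T) : ℝ :=
  (N : ℝ)⁻¹ * ∑ m : Fin N, Real.log ((N : ℝ) / (cnt X m))

variable {T U : Type*} [DecidableEq T] [DecidableEq U]

lemma cnt_pos (X : Fin N → T) (m : Fin N) : 0 < cnt X m :=
  Finset.card_pos.2 ⟨m, by simp [cnt]⟩

lemma cnt_le (X : Fin N → T) (m : Fin N) : cnt X m ≤ N :=
  (Finset.card_filter_le _ _).trans (by simp)

lemma cnt_congr (X : Fin N → T) {a b : Fin N} (h : X a = X b) : cnt X a = cnt X b := by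
  unfold cnt
  congr 1
  apply Finset.filter_congr
  intro m _
  rw [h]

lemma cnt_le_of_det {X : Fin N → T} {Y : Fin N → U}
    (h : ∀ a b, X a = X b → Y a = Y b) (m : Fin N) : cnt X m ≤ cnt Y m := by
  apply Finset.card_le_card
  intro x hx
  simp only [cnt, Finset.mem_filter, Finset.mem_univ, true_and] at *
  exact h _ _ hx

lemma ent_le_det {X : Fin N → T} {Y : Fin N → U}
    (h : ∀ a b, X a = X b → Y a = Y b) : ent Y ≤ ent X := by
  unfold ent
  apply mul_le_mul_of_nonneg_left _ (by positivity)
  apply Finset.sum_le_sum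
  intro m _
  have hN : (0:ℝ) < N := by exact_mod_cast m.pos
  have h1 : (0:ℝ) < cnt X m := by exact_mod_cast cnt_pos X m
  have h2 : (0:ℝ) < cnt Y m := by exact_mod_cast cnt_pos Y m
  have h3 : (cnt X m : ℝ) ≤ cnt Y m := by exact_mod_cast cnt_le_of_det h m
  apply Real.log_le_log (by positivity)
  exact div_le_div_of_nonneg_left (le_of_lt hN) h1 h3

lemma ent_id (hN : 0 < N) : ent (fun m : Fin N => m) = Real.log N := by
  have hc : ∀ m : Fin N, cnt (fun m : Fin N => m) m = 1 := by
    intro m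
    unfold cnt
    rw [show (Finset.univ.filter (fun m' : Fin N => m' = m)) = {m} by ext x; simp]
    simp
  have hterm : ∀ m : Fin N, Real.log ((N:ℝ) / (cnt (fun m : Fin N => m) m)) = Real.log N := by
    intro m
    rw [hc m]
    norm_num
  unfold ent
  rw [Finset.sum_congr rfl (fun m _ => hterm m), Finset.sum_const, Finset.card_univ,
    Fintype.card_fin, nsmul_eq_mul, ← mul_assoc, inv_mul_cancel₀ (by positivity : (N:ℝ) ≠ 0),
    one_mul]

lemma logN_le_ent {X : Fin N → T} (hN : 0 < N)
    (h : ∀ a b, X a = X b → a = b) : Real.log N ≤ ent X := by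
  rw [← ent_id hN]
  exact ent_le_det h

lemma ent_le_log {K : ℕ} (hN : 0 < N) (hK : 0 < K) (X : Fin N → Fin K) :
    ent X ≤ Real.log K := by
  have hNr : (0:ℝ) < N := by exact_mod_cast hN
  have hKr : (0:ℝ) < K := by exact_mod_cast hK
  have key : ∑ m : Fin N, ((cnt X m : ℝ))⁻¹ ≤ K := by
    rw [← Finset.sum_fiberwise Finset.univ X (fun m => ((cnt X m : ℝ))⁻¹)]
    have hv : ∀ v : Fin K, (∑ m ∈ Finset.univ.filter (fun m => X m = v),
        ((cnt X m : ℝ))⁻¹) ≤ 1 := by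
      intro v
      have hcnt : ∀ m ∈ Finset.univ.filter (fun m => X m = v),
          cnt X m = (Finset.univ.filter (fun m => X m = v)).card := by
        intro m hm
        simp only [Finset.mem_filter, Finset.mem_univ, true_and] at hm
        unfold cnt
        congr 1
        apply Finset.filter_congr
        intro x _
        rw [hm]
      rw [Finset.sum_congr rfl (fun m hm => by rw [hcnt m hm]), Finset.sum_const]
      rcases Nat.eq_zero_or_pos (Finset.univ.filter (fun m => X m = v)).card with h0 | h0
      · rw [h0]; norm_num
      · have hne : ((Finset.univ.filter (fun m => X m = v)).card : ℝ) ≠ 0 := by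
          exact_mod_cast h0.ne'
        rw [nsmul_eq_mul, mul_inv_cancel₀ hne]
    calc (∑ v : Fin K, ∑ m ∈ Finset.univ.filter (fun m => X m = v), ((cnt X m : ℝ))⁻¹)
        ≤ ∑ _v : Fin K, (1:ℝ) := Finset.sum_le_sum (fun v _ => hv v)
      _ = K := by simp
  have hsum : ∑ m : Fin N, (Real.log ((N:ℝ) / cnt X m) - Real.log K) ≤ 0 := by
    have step1 : ∑ m : Fin N, (Real.log ((N:ℝ) / cnt X m) - Real.log K)
        ≤ ∑ m : Fin N, ((N:ℝ)/K * ((cnt X m : ℝ))⁻¹ - 1) := by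
      apply Finset.sum_le_sum
      intro m _
      have hc : (0:ℝ) < cnt X m := by exact_mod_cast cnt_pos X m
      have harg : (0:ℝ) < (N:ℝ)/(cnt X m * K) := by positivity
      have hlog := Real.log_le_sub_one_of_pos harg
      have heq : Real.log ((N:ℝ)/(cnt X m * K)) =
          Real.log ((N:ℝ)/cnt X m) - Real.log K := by
        rw [div_mul_eq_div_div, Real.log_div (by positivity) (by positivity)]
      have heq2 : (N:ℝ)/(cnt X m * K) = (N:ℝ)/K * ((cnt X m : ℝ))⁻¹ := by
        rw [mul_comm ((cnt X m : ℝ)) ((K:ℝ)), ← div_div, div_eq_mul_inv]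
      rw [heq, heq2] at hlog
      linarith
    have step2 : ∑ m : Fin N, ((N:ℝ)/K * ((cnt X m : ℝ))⁻¹ - 1) ≤ 0 := by
      rw [Finset.sum_sub_distrib, Finset.sum_const, Finset.card_univ, Fintype.card_fin,
        ← Finset.mul_sum]
      have : (N:ℝ)/K * (∑ m : Fin N, ((cnt X m : ℝ))⁻¹) ≤ (N:ℝ)/K * K :=
        mul_le_mul_of_nonneg_left key (by positivity)
      have hNK : (N:ℝ)/K * K = N := by field_simp
      rw [nsmul_eq_mul, mul_one]
      linarith
    linarith
  rw [Finset.sum_sub_distrib, Finset.sum_const, Finset.card_univ, Fintype.card_fin,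
    nsmul_eq_mul] at hsum
  unfold ent
  have h2 : ∑ m : Fin N, Real.log ((N:ℝ) / cnt X m) ≤ (N:ℝ) * Real.log K := by linarith
  calc (N:ℝ)⁻¹ * ∑ m : Fin N, Real.log ((N:ℝ) / cnt X m)
      ≤ (N:ℝ)⁻¹ * ((N:ℝ) * Real.log K) :=
        mul_le_mul_of_nonneg_left h2 (by positivity)
    _ = Real.log K := by
        rw [← mul_assoc, inv_mul_cancel₀ (ne_of_gt hNr), one_mul]


section Submod
variable {N : ℕ} {A B C : Type*} [DecidableEq A] [DecidableEq B] [DecidableEq C]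

lemma sum_ratio_le (X : Fin N → A) (Y : Fin N → B) (Z : Fin N → C)
    (hXZ : ∀ a b, X a = X b → Z a = Z b) (hYZ : ∀ a b, Y a = Y b → Z a = Z b) :
    ∑ m : Fin N, (cnt X m * cnt Y m : ℝ) /
      (cnt (fun m' => (X m', Y m')) m * cnt Z m) ≤ N := by
  set P : Fin N → A × B := fun m' => (X m', Y m') with hP
  have hcard : ∀ m : Fin N, (cnt X m * cnt Y m : ℝ) =
      ∑ a : Fin N, ∑ b : Fin N, (if X a = X m ∧ Y b = Y m then (1:ℝ) else 0) := by
    intro m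
    have hx : ((cnt X m : ℕ) : ℝ) = ∑ a : Fin N, (if X a = X m then (1:ℝ) else 0) := by
      rw [Finset.sum_boole]
      norm_cast
    have hy : ((cnt Y m : ℕ) : ℝ) = ∑ b : Fin N, (if Y b = Y m then (1:ℝ) else 0) := by
      rw [Finset.sum_boole]
      norm_cast
    rw [hx, hy, Finset.sum_mul_sum]
    apply Finset.sum_congr rfl
    intro a _
    apply Finset.sum_congr rfl
    intro b _
    by_cases hp : X a = X m <;> by_cases hq : Y b = Y m <;> simp [hp, hq]
  have hstepB : ∀ a b : Fin N,
      (∑ m : Fin N, (if X a = X m ∧ Y b = Y m then ((cnt P m : ℝ) * cnt Z m)⁻¹ else 0))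
      ≤ (if Z b = Z a then ((cnt Z a : ℝ))⁻¹ else 0) := by
    intro a b
    rw [Finset.sum_ite, Finset.sum_const_zero, add_zero]
    set F := Finset.univ.filter (fun m => X a = X m ∧ Y b = Y m) with hF
    have hmem : ∀ m ∈ F, X a = X m ∧ Y b = Y m := by
      intro m hm
      exact (Finset.mem_filter.1 hm).2
    have hPF : ∀ m ∈ F, cnt P m = F.card := by
      intro m hm
      obtain ⟨h1, h2⟩ := hmem m hm
      unfold cnt
      congr 1
      apply Finset.filter_congr
      intro x _
      simp only [hP, Prod.mk.injEq]
      constructor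
      · rintro ⟨u, v⟩
        exact ⟨h1.trans u.symm, h2.trans v.symm⟩
      · rintro ⟨u, v⟩
        exact ⟨u.symm.trans h1, v.symm.trans h2⟩
    have hZF : ∀ m ∈ F, cnt Z m = cnt Z a := by
      intro m hm
      exact (cnt_congr Z (hXZ a m (hmem m hm).1)).symm
    rcases Finset.eq_empty_or_nonempty F with hE | ⟨m₀, hm₀⟩
    · rw [hE, Finset.sum_empty]
      split_ifs
      · positivity
      · exact le_refl 0
    · have hZba : Z b = Z a := by
        obtain ⟨h1, h2⟩ := hmem m₀ hm₀
        exact (hYZ b m₀ h2).trans (hXZ a m₀ h1).symm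
      rw [if_pos hZba]
      have hsum : ∑ m ∈ F, ((cnt P m : ℝ) * cnt Z m)⁻¹
          = ∑ m ∈ F, ((F.card : ℝ) * cnt Z a)⁻¹ := by
        apply Finset.sum_congr rfl
        intro m hm
        rw [hPF m hm, hZF m hm]
      rw [hsum, Finset.sum_const, nsmul_eq_mul]
      have hcne : ((F.card : ℕ) : ℝ) ≠ 0 := by
        have : 0 < F.card := Finset.card_pos.2 ⟨m₀, hm₀⟩
        exact_mod_cast this.ne'
      have hzne : ((cnt Z a : ℕ) : ℝ) ≠ 0 := by
        have := cnt_pos Z a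
        exact_mod_cast this.ne'
      rw [mul_inv, ← mul_assoc, mul_inv_cancel₀ hcne, one_mul]
  have hstepC : ∀ a : Fin N,
      (∑ b : Fin N, (if Z b = Z a then ((cnt Z a : ℝ))⁻¹ else 0)) = 1 := by
    intro a
    rw [Finset.sum_ite, Finset.sum_const_zero, add_zero, Finset.sum_const, nsmul_eq_mul]
    have hzne : ((cnt Z a : ℕ) : ℝ) ≠ 0 := by
      have := cnt_pos Z a
      exact_mod_cast this.ne'
    have : (Finset.univ.filter (fun b => Z b = Z a)).card = cnt Z a := rfl
    rw [this, mul_inv_cancel₀ hzne]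
  calc ∑ m : Fin N, (cnt X m * cnt Y m : ℝ) / (cnt P m * cnt Z m)
      = ∑ m : Fin N, ∑ a : Fin N, ∑ b : Fin N,
          (if X a = X m ∧ Y b = Y m then ((cnt P m : ℝ) * cnt Z m)⁻¹ else 0) := by
        apply Finset.sum_congr rfl
        intro m _
        rw [hcard m, Finset.sum_div]
        apply Finset.sum_congr rfl
        intro a _
        rw [Finset.sum_div]
        apply Finset.sum_congr rfl
        intro b _
        split_ifs
        · rw [one_div]
        · rw [zero_div]
    _ = ∑ a : Fin N, ∑ b : Fin N, ∑ m : Fin N,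
          (if X a = X m ∧ Y b = Y m then ((cnt P m : ℝ) * cnt Z m)⁻¹ else 0) := by
        rw [Finset.sum_comm]
        apply Finset.sum_congr rfl
        intro a _
        rw [Finset.sum_comm]
    _ ≤ ∑ a : Fin N, ∑ b : Fin N, (if Z b = Z a then ((cnt Z a : ℝ))⁻¹ else 0) := by
        apply Finset.sum_le_sum
        intro a _
        apply Finset.sum_le_sum
        intro b _
        exact hstepB a b
    _ = ∑ _a : Fin N, (1:ℝ) := Finset.sum_congr rfl (fun a _ => hstepC a)
    _ = N := by simp

lemma ent_submod (X : Fin N → A) (Y : Fin N → B) (Z : Fin N → C)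
    (hXZ : ∀ a b, X a = X b → Z a = Z b) (hYZ : ∀ a b, Y a = Y b → Z a = Z b) :
    ent (fun m => (X m, Y m)) + ent Z ≤ ent X + ent Y := by
  set P : Fin N → A × B := fun m => (X m, Y m) with hPdef
  have key := sum_ratio_le X Y Z hXZ hYZ
  have hmain : ∑ m : Fin N, (Real.log ((N:ℝ)/cnt P m) + Real.log ((N:ℝ)/cnt Z m))
      ≤ ∑ m : Fin N, (Real.log ((N:ℝ)/cnt X m) + Real.log ((N:ℝ)/cnt Y m)) := by
    have hpt : ∀ m : Fin N,
        Real.log ((N:ℝ)/cnt P m) + Real.log ((N:ℝ)/cnt Z m)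
        ≤ Real.log ((N:ℝ)/cnt X m) + Real.log ((N:ℝ)/cnt Y m)
          + ((cnt X m * cnt Y m : ℝ) / (cnt P m * cnt Z m) - 1) := by
      intro m
      have hN : (0:ℝ) < N := by exact_mod_cast m.pos
      have hx : (0:ℝ) < cnt X m := by exact_mod_cast cnt_pos X m
      have hy : (0:ℝ) < cnt Y m := by exact_mod_cast cnt_pos Y m
      have hp : (0:ℝ) < cnt P m := by exact_mod_cast cnt_pos P m
      have hz : (0:ℝ) < cnt Z m := by exact_mod_cast cnt_pos Z m
      have hr : (0:ℝ) < (cnt X m * cnt Y m : ℝ) / (cnt P m * cnt Z m) := by positivity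
      have hlog := Real.log_le_sub_one_of_pos hr
      have hexp : Real.log ((cnt X m * cnt Y m : ℝ) / (cnt P m * cnt Z m))
          = (Real.log ((N:ℝ)/cnt P m) + Real.log ((N:ℝ)/cnt Z m))
            - (Real.log ((N:ℝ)/cnt X m) + Real.log ((N:ℝ)/cnt Y m)) := by
        rw [Real.log_div (by positivity) (by positivity),
          Real.log_mul (ne_of_gt hx) (ne_of_gt hy),
          Real.log_mul (ne_of_gt hp) (ne_of_gt hz),
          Real.log_div (ne_of_gt hN) (ne_of_gt hp),
          Real.log_div (ne_of_gt hN) (ne_of_gt hz),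
          Real.log_div (ne_of_gt hN) (ne_of_gt hx),
          Real.log_div (ne_of_gt hN) (ne_of_gt hy)]
        ring
      rw [hexp] at hlog
      linarith
    calc ∑ m : Fin N, (Real.log ((N:ℝ)/cnt P m) + Real.log ((N:ℝ)/cnt Z m))
        ≤ ∑ m : Fin N, (Real.log ((N:ℝ)/cnt X m) + Real.log ((N:ℝ)/cnt Y m)
            + ((cnt X m * cnt Y m : ℝ) / (cnt P m * cnt Z m) - 1)) :=
          Finset.sum_le_sum (fun m _ => hpt m)
      _ ≤ ∑ m : Fin N, (Real.log ((N:ℝ)/cnt X m) + Real.log ((N:ℝ)/cnt Y m)) := by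
          rw [Finset.sum_add_distrib, Finset.sum_sub_distrib, Finset.sum_const,
            Finset.card_univ, Fintype.card_fin, nsmul_eq_mul, mul_one]
          linarith
  unfold ent
  rw [Finset.sum_add_distrib, Finset.sum_add_distrib] at hmain
  have hNinv : (0:ℝ) ≤ (N:ℝ)⁻¹ := by positivity
  nlinarith [mul_le_mul_of_nonneg_left hmain hNinv]

lemma ent_const {T : Type*} [DecidableEq T] (c : T) : ent (fun _ : Fin N => c) = 0 := by
  unfold ent
  have hc : ∀ m : Fin N, cnt (fun _ : Fin N => c) m = N := by
    intro m
    unfold cnt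
    simp
  rw [Finset.sum_congr rfl (fun m _ => by
    rw [hc m, div_self (by exact_mod_cast m.pos.ne' : (N:ℝ) ≠ 0), Real.log_one])]
  simp

lemma ent_pair_le (X : Fin N → A) (Y : Fin N → B) :
    ent (fun m => (X m, Y m)) ≤ ent X + ent Y := by
  have h := ent_submod X Y (fun _ => (0 : Fin 1))
    (fun a b _ => rfl) (fun a b _ => rfl)
  rw [ent_const] at h
  linarith

end Submod

end EntLib


section Code

lemma detW {N Kd K : ℕ} (c : ExactRepairCode433 N Kd K) (j : Fin 4) {a b : Fin N}
    (h : ∀ i : Fin 4, i ≠ j → c.F i j (c.f i a) = c.F i j (c.f i b)) :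
    c.f j a = c.f j b := by
  rw [← c.repair j a, ← c.repair j b]
  congr 1
  funext i
  exact h i.1 i.2

lemma rec3 {N Kd K : ℕ} (c : ExactRepairCode433 N Kd K) (i j k : Fin 4)
    (hA : ({i, j, k} : Finset (Fin 4)).card = 3) {a b : Fin N}
    (hi : c.f i a = c.f i b) (hj : c.f j a = c.f j b) (hk : c.f k a = c.f k b) :
    a = b := by
  apply c.reconstruct {i,j,k} hA
  funext x
  obtain ⟨x, hx⟩ := x
  simp only [Finset.mem_insert, Finset.mem_singleton] at hx
  rcases hx with rfl | rfl | rfl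
  · exact hi
  · exact hj
  · exact hk

lemma main_log {N Kd K : ℕ} (hN : 0 < N) (hKd : 0 < Kd) (hK : 0 < K)
    (c : ExactRepairCode433 N Kd K) :
    3 * Real.log N ≤ 4 * Real.log Kd + 6 * Real.log K := by
  have s0 : ent (fun m : Fin N => ((c.f 0 m), (c.F 2 1 (c.f 2 m)))) ≤ ent (fun m : Fin N => c.f 0 m) + ent (fun m : Fin N => c.F 2 1 (c.f 2 m)) :=
    ent_pair_le (fun m : Fin N => c.f 0 m) (fun m : Fin N => c.F 2 1 (c.f 2 m))
  have r0 : ent (fun m : Fin N => (c.F 2 1 (c.f 2 m), c.f 0 m)) ≤ ent (fun m : Fin N => ((c.f 0 m), (c.F 2 1 (c.f 2 m)))) := by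
    apply ent_le_det
    intro a b h
    simp only [Prod.mk.injEq] at h
    obtain ⟨hW0, hS21⟩ := h
    simp only [Prod.mk.injEq]
    exact ⟨hS21, hW0⟩
  have s1 : ent (fun m : Fin N => ((c.f 0 m), (c.F 3 1 (c.f 3 m)))) ≤ ent (fun m : Fin N => c.f 0 m) + ent (fun m : Fin N => c.F 3 1 (c.f 3 m)) :=
    ent_pair_le (fun m : Fin N => c.f 0 m) (fun m : Fin N => c.F 3 1 (c.f 3 m))
  have r1 : ent (fun m : Fin N => (c.F 3 1 (c.f 3 m), c.f 0 m)) ≤ ent (fun m : Fin N => ((c.f 0 m), (c.F 3 1 (c.f 3 m)))) := by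
    apply ent_le_det
    intro a b h
    simp only [Prod.mk.injEq] at h
    obtain ⟨hW0, hS31⟩ := h
    simp only [Prod.mk.injEq]
    exact ⟨hS31, hW0⟩
  have s2 : ent (fun m : Fin N => ((c.f 1 m), (c.F 0 2 (c.f 0 m)))) ≤ ent (fun m : Fin N => c.f 1 m) + ent (fun m : Fin N => c.F 0 2 (c.f 0 m)) :=
    ent_pair_le (fun m : Fin N => c.f 1 m) (fun m : Fin N => c.F 0 2 (c.f 0 m))
  have r2 : ent (fun m : Fin N => (c.F 0 2 (c.f 0 m), c.f 1 m)) ≤ ent (fun m : Fin N => ((c.f 1 m), (c.F 0 2 (c.f 0 m)))) := by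
    apply ent_le_det
    intro a b h
    simp only [Prod.mk.injEq] at h
    obtain ⟨hW1, hS02⟩ := h
    simp only [Prod.mk.injEq]
    exact ⟨hS02, hW1⟩
  have s3 : ent (fun m : Fin N => ((c.f 1 m), (c.F 0 3 (c.f 0 m)))) ≤ ent (fun m : Fin N => c.f 1 m) + ent (fun m : Fin N => c.F 0 3 (c.f 0 m)) :=
    ent_pair_le (fun m : Fin N => c.f 1 m) (fun m : Fin N => c.F 0 3 (c.f 0 m))
  have r3 : ent (fun m : Fin N => (c.F 0 3 (c.f 0 m), c.f 1 m)) ≤ ent (fun m : Fin N => ((c.f 1 m), (c.F 0 3 (c.f 0 m)))) := by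
    apply ent_le_det
    intro a b h
    simp only [Prod.mk.injEq] at h
    obtain ⟨hW1, hS03⟩ := h
    simp only [Prod.mk.injEq]
    exact ⟨hS03, hW1⟩
  have s4 : ent (fun m : Fin N => ((c.f 1 m), (c.F 2 3 (c.f 2 m)))) ≤ ent (fun m : Fin N => c.f 1 m) + ent (fun m : Fin N => c.F 2 3 (c.f 2 m)) :=
    ent_pair_le (fun m : Fin N => c.f 1 m) (fun m : Fin N => c.F 2 3 (c.f 2 m))
  have r4 : ent (fun m : Fin N => (c.F 2 3 (c.f 2 m), c.f 1 m)) ≤ ent (fun m : Fin N => ((c.f 1 m), (c.F 2 3 (c.f 2 m)))) := by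
    apply ent_le_det
    intro a b h
    simp only [Prod.mk.injEq] at h
    obtain ⟨hW1, hS23⟩ := h
    simp only [Prod.mk.injEq]
    exact ⟨hS23, hW1⟩
  have s5 : ent (fun m : Fin N => ((c.f 2 m), (c.F 0 1 (c.f 0 m)))) ≤ ent (fun m : Fin N => c.f 2 m) + ent (fun m : Fin N => c.F 0 1 (c.f 0 m)) :=
    ent_pair_le (fun m : Fin N => c.f 2 m) (fun m : Fin N => c.F 0 1 (c.f 0 m))
  have r5 : ent (fun m : Fin N => (c.F 0 1 (c.f 0 m), c.f 2 m)) ≤ ent (fun m : Fin N => ((c.f 2 m), (c.F 0 1 (c.f 0 m)))) := by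
    apply ent_le_det
    intro a b h
    simp only [Prod.mk.injEq] at h
    obtain ⟨hW2, hS01⟩ := h
    simp only [Prod.mk.injEq]
    exact ⟨hS01, hW2⟩
  have s6 : ent (fun m : Fin N => ((c.f 2 m), (c.F 3 1 (c.f 3 m)))) ≤ ent (fun m : Fin N => c.f 2 m) + ent (fun m : Fin N => c.F 3 1 (c.f 3 m)) :=
    ent_pair_le (fun m : Fin N => c.f 2 m) (fun m : Fin N => c.F 3 1 (c.f 3 m))
  have r6 : ent (fun m : Fin N => (c.F 3 1 (c.f 3 m), c.f 2 m)) ≤ ent (fun m : Fin N => ((c.f 2 m), (c.F 3 1 (c.f 3 m)))) := by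
    apply ent_le_det
    intro a b h
    simp only [Prod.mk.injEq] at h
    obtain ⟨hW2, hS31⟩ := h
    simp only [Prod.mk.injEq]
    exact ⟨hS31, hW2⟩
  have s7 : ent (fun m : Fin N => ((c.f 3 m), (c.F 3 1 (c.f 3 m), c.f 1 m))) + ent (fun m : Fin N => c.F 3 1 (c.f 3 m)) ≤ ent (fun m : Fin N => c.f 3 m) + ent (fun m : Fin N => (c.F 3 1 (c.f 3 m), c.f 1 m)) := by
    apply ent_submod
    · intro a b h
      have hW3 := h
      have hS30 : c.F 3 0 (c.f 3 a) = c.F 3 0 (c.f 3 b) := by rw [hW3]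
      have hS31 : c.F 3 1 (c.f 3 a) = c.F 3 1 (c.f 3 b) := by rw [hW3]
      have hS32 : c.F 3 2 (c.f 3 a) = c.F 3 2 (c.f 3 b) := by rw [hW3]
      exact hS31
    · intro a b h
      simp only [Prod.mk.injEq] at h
      obtain ⟨hS31, hW1⟩ := h
      exact hS31
  have r7 : ent (fun m : Fin N => (c.f 1 m, c.f 3 m)) ≤ ent (fun m : Fin N => ((c.f 3 m), (c.F 3 1 (c.f 3 m), c.f 1 m))) := by
    apply ent_le_det
    intro a b h
    simp only [Prod.mk.injEq] at h
    obtain ⟨hW3, ⟨hS31, hW1⟩⟩ := h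
    simp only [Prod.mk.injEq]
    exact ⟨hW1, hW3⟩
  have s8 : ent (fun m : Fin N => ((c.f 1 m, c.f 3 m), (c.F 0 2 (c.f 0 m), c.f 1 m))) + ent (fun m : Fin N => c.f 1 m) ≤ ent (fun m : Fin N => (c.f 1 m, c.f 3 m)) + ent (fun m : Fin N => (c.F 0 2 (c.f 0 m), c.f 1 m)) := by
    apply ent_submod
    · intro a b h
      simp only [Prod.mk.injEq] at h
      obtain ⟨hW1, hW3⟩ := h
      exact hW1
    · intro a b h
      simp only [Prod.mk.injEq] at h
      obtain ⟨hS02, hW1⟩ := h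
      exact hW1
  have r8 : Real.log N ≤ ent (fun m : Fin N => ((c.f 1 m, c.f 3 m), (c.F 0 2 (c.f 0 m), c.f 1 m))) := by
    apply logN_le_ent hN
    intro a b h
    simp only [Prod.mk.injEq] at h
    obtain ⟨⟨hW1, hW3⟩, ⟨hS02, hW1⟩⟩ := h
    have hS10 : c.F 1 0 (c.f 1 a) = c.F 1 0 (c.f 1 b) := by rw [hW1]
    have hS12 : c.F 1 2 (c.f 1 a) = c.F 1 2 (c.f 1 b) := by rw [hW1]
    have hS13 : c.F 1 3 (c.f 1 a) = c.F 1 3 (c.f 1 b) := by rw [hW1]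
    have hS30 : c.F 3 0 (c.f 3 a) = c.F 3 0 (c.f 3 b) := by rw [hW3]
    have hS31 : c.F 3 1 (c.f 3 a) = c.F 3 1 (c.f 3 b) := by rw [hW3]
    have hS32 : c.F 3 2 (c.f 3 a) = c.F 3 2 (c.f 3 b) := by rw [hW3]
    have hW2 : c.f 2 a = c.f 2 b := by
      apply detW c 2
      intro i hi
      fin_cases i
      · exact hS02
      · exact hS12
      · exact absurd rfl hi
      · exact hS32
    have hS20 : c.F 2 0 (c.f 2 a) = c.F 2 0 (c.f 2 b) := by rw [hW2]
    have hS21 : c.F 2 1 (c.f 2 a) = c.F 2 1 (c.f 2 b) := by rw [hW2]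
    have hS23 : c.F 2 3 (c.f 2 a) = c.F 2 3 (c.f 2 b) := by rw [hW2]
    have hab : a = b := rec3 c 1 2 3 (by decide) hW1 hW2 hW3
    exact hab
  have s9 : ent (fun m : Fin N => ((c.F 2 1 (c.f 2 m), c.f 0 m), (c.F 3 1 (c.f 3 m), c.f 0 m))) + ent (fun m : Fin N => c.f 0 m) ≤ ent (fun m : Fin N => (c.F 2 1 (c.f 2 m), c.f 0 m)) + ent (fun m : Fin N => (c.F 3 1 (c.f 3 m), c.f 0 m)) := by
    apply ent_submod
    · intro a b h
      simp only [Prod.mk.injEq] at h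
      obtain ⟨hS21, hW0⟩ := h
      exact hW0
    · intro a b h
      simp only [Prod.mk.injEq] at h
      obtain ⟨hS31, hW0⟩ := h
      exact hW0
  have r9 : ent (fun m : Fin N => (c.F 2 1 (c.f 2 m), c.F 3 1 (c.f 3 m), c.f 0 m)) ≤ ent (fun m : Fin N => ((c.F 2 1 (c.f 2 m), c.f 0 m), (c.F 3 1 (c.f 3 m), c.f 0 m))) := by
    apply ent_le_det
    intro a b h
    simp only [Prod.mk.injEq] at h
    obtain ⟨⟨hS21, hW0⟩, ⟨hS31, hW0⟩⟩ := h
    simp only [Prod.mk.injEq]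
    exact ⟨hS21, hS31, hW0⟩
  have s10 : ent (fun m : Fin N => ((c.F 0 3 (c.f 0 m), c.f 1 m), (c.F 2 3 (c.f 2 m), c.f 1 m))) + ent (fun m : Fin N => c.f 1 m) ≤ ent (fun m : Fin N => (c.F 0 3 (c.f 0 m), c.f 1 m)) + ent (fun m : Fin N => (c.F 2 3 (c.f 2 m), c.f 1 m)) := by
    apply ent_submod
    · intro a b h
      simp only [Prod.mk.injEq] at h
      obtain ⟨hS03, hW1⟩ := h
      exact hW1
    · intro a b h
      simp only [Prod.mk.injEq] at h
      obtain ⟨hS23, hW1⟩ := h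
      exact hW1
  have r10 : ent (fun m : Fin N => (c.F 0 3 (c.f 0 m), c.F 2 3 (c.f 2 m), c.f 1 m)) ≤ ent (fun m : Fin N => ((c.F 0 3 (c.f 0 m), c.f 1 m), (c.F 2 3 (c.f 2 m), c.f 1 m))) := by
    apply ent_le_det
    intro a b h
    simp only [Prod.mk.injEq] at h
    obtain ⟨⟨hS03, hW1⟩, ⟨hS23, hW1⟩⟩ := h
    simp only [Prod.mk.injEq]
    exact ⟨hS03, hS23, hW1⟩
  have s11 : ent (fun m : Fin N => ((c.F 0 1 (c.f 0 m), c.f 2 m), (c.F 3 1 (c.f 3 m), c.f 2 m))) + ent (fun m : Fin N => c.f 2 m) ≤ ent (fun m : Fin N => (c.F 0 1 (c.f 0 m), c.f 2 m)) + ent (fun m : Fin N => (c.F 3 1 (c.f 3 m), c.f 2 m)) := by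
    apply ent_submod
    · intro a b h
      simp only [Prod.mk.injEq] at h
      obtain ⟨hS01, hW2⟩ := h
      exact hW2
    · intro a b h
      simp only [Prod.mk.injEq] at h
      obtain ⟨hS31, hW2⟩ := h
      exact hW2
  have r11 : ent (fun m : Fin N => (c.F 0 1 (c.f 0 m), c.F 3 1 (c.f 3 m), c.f 2 m)) ≤ ent (fun m : Fin N => ((c.F 0 1 (c.f 0 m), c.f 2 m), (c.F 3 1 (c.f 3 m), c.f 2 m))) := by
    apply ent_le_det
    intro a b h
    simp only [Prod.mk.injEq] at h
    obtain ⟨⟨hS01, hW2⟩, ⟨hS31, hW2⟩⟩ := h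
    simp only [Prod.mk.injEq]
    exact ⟨hS01, hS31, hW2⟩
  have s12 : ent (fun m : Fin N => ((c.F 2 1 (c.f 2 m), c.F 3 1 (c.f 3 m), c.f 1 m), (c.F 2 3 (c.f 2 m), c.F 3 1 (c.f 3 m), c.f 1 m))) + ent (fun m : Fin N => (c.F 3 1 (c.f 3 m), c.f 1 m)) ≤ ent (fun m : Fin N => (c.F 2 1 (c.f 2 m), c.F 3 1 (c.f 3 m), c.f 1 m)) + ent (fun m : Fin N => (c.F 2 3 (c.f 2 m), c.F 3 1 (c.f 3 m), c.f 1 m)) := by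
    apply ent_submod
    · intro a b h
      simp only [Prod.mk.injEq] at h
      obtain ⟨hS21, hS31, hW1⟩ := h
      simp only [Prod.mk.injEq]
      exact ⟨hS31, hW1⟩
    · intro a b h
      simp only [Prod.mk.injEq] at h
      obtain ⟨hS23, hS31, hW1⟩ := h
      simp only [Prod.mk.injEq]
      exact ⟨hS31, hW1⟩
  have r12 : ent (fun m : Fin N => (c.F 2 1 (c.f 2 m), c.F 2 3 (c.f 2 m), c.F 3 1 (c.f 3 m), c.f 1 m)) ≤ ent (fun m : Fin N => ((c.F 2 1 (c.f 2 m), c.F 3 1 (c.f 3 m), c.f 1 m), (c.F 2 3 (c.f 2 m), c.F 3 1 (c.f 3 m), c.f 1 m))) := by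
    apply ent_le_det
    intro a b h
    simp only [Prod.mk.injEq] at h
    obtain ⟨⟨hS21, hS31, hW1⟩, ⟨hS23, hS31, hW1⟩⟩ := h
    simp only [Prod.mk.injEq]
    exact ⟨hS21, hS23, hS31, hW1⟩
  have s13 : ent (fun m : Fin N => ((c.F 2 1 (c.f 2 m), c.F 3 1 (c.f 3 m), c.f 0 m), (c.F 2 1 (c.f 2 m), c.F 2 3 (c.f 2 m), c.F 3 1 (c.f 3 m), c.f 1 m))) + ent (fun m : Fin N => (c.F 2 1 (c.f 2 m), c.F 3 1 (c.f 3 m), c.f 1 m)) ≤ ent (fun m : Fin N => (c.F 2 1 (c.f 2 m), c.F 3 1 (c.f 3 m), c.f 0 m)) + ent (fun m : Fin N => (c.F 2 1 (c.f 2 m), c.F 2 3 (c.f 2 m), c.F 3 1 (c.f 3 m), c.f 1 m)) := by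
    apply ent_submod
    · intro a b h
      simp only [Prod.mk.injEq] at h
      obtain ⟨hS21, hS31, hW0⟩ := h
      have hS01 : c.F 0 1 (c.f 0 a) = c.F 0 1 (c.f 0 b) := by rw [hW0]
      have hS02 : c.F 0 2 (c.f 0 a) = c.F 0 2 (c.f 0 b) := by rw [hW0]
      have hS03 : c.F 0 3 (c.f 0 a) = c.F 0 3 (c.f 0 b) := by rw [hW0]
      have hW1 : c.f 1 a = c.f 1 b := by
        apply detW c 1
        intro i hi
        fin_cases i
        · exact hS01
        · exact absurd rfl hi
        · exact hS21
        · exact hS31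
      have hS10 : c.F 1 0 (c.f 1 a) = c.F 1 0 (c.f 1 b) := by rw [hW1]
      have hS12 : c.F 1 2 (c.f 1 a) = c.F 1 2 (c.f 1 b) := by rw [hW1]
      have hS13 : c.F 1 3 (c.f 1 a) = c.F 1 3 (c.f 1 b) := by rw [hW1]
      simp only [Prod.mk.injEq]
      exact ⟨hS21, hS31, hW1⟩
    · intro a b h
      simp only [Prod.mk.injEq] at h
      obtain ⟨hS21, hS23, hS31, hW1⟩ := h
      simp only [Prod.mk.injEq]
      exact ⟨hS21, hS31, hW1⟩
  have r13 : Real.log N ≤ ent (fun m : Fin N => ((c.F 2 1 (c.f 2 m), c.F 3 1 (c.f 3 m), c.f 0 m), (c.F 2 1 (c.f 2 m), c.F 2 3 (c.f 2 m), c.F 3 1 (c.f 3 m), c.f 1 m))) := by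
    apply logN_le_ent hN
    intro a b h
    simp only [Prod.mk.injEq] at h
    obtain ⟨⟨hS21, hS31, hW0⟩, ⟨hS21, hS23, hS31, hW1⟩⟩ := h
    have hS01 : c.F 0 1 (c.f 0 a) = c.F 0 1 (c.f 0 b) := by rw [hW0]
    have hS02 : c.F 0 2 (c.f 0 a) = c.F 0 2 (c.f 0 b) := by rw [hW0]
    have hS03 : c.F 0 3 (c.f 0 a) = c.F 0 3 (c.f 0 b) := by rw [hW0]
    have hS10 : c.F 1 0 (c.f 1 a) = c.F 1 0 (c.f 1 b) := by rw [hW1]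
    have hS12 : c.F 1 2 (c.f 1 a) = c.F 1 2 (c.f 1 b) := by rw [hW1]
    have hS13 : c.F 1 3 (c.f 1 a) = c.F 1 3 (c.f 1 b) := by rw [hW1]
    have hW3 : c.f 3 a = c.f 3 b := by
      apply detW c 3
      intro i hi
      fin_cases i
      · exact hS03
      · exact hS13
      · exact hS23
      · exact absurd rfl hi
    have hS30 : c.F 3 0 (c.f 3 a) = c.F 3 0 (c.f 3 b) := by rw [hW3]
    have hS32 : c.F 3 2 (c.f 3 a) = c.F 3 2 (c.f 3 b) := by rw [hW3]
    have hab : a = b := rec3 c 0 1 3 (by decide) hW0 hW1 hW3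
    exact hab
  have s14 : ent (fun m : Fin N => ((c.F 0 1 (c.f 0 m), c.F 2 3 (c.f 2 m), c.F 3 1 (c.f 3 m), c.f 1 m), (c.F 0 3 (c.f 0 m), c.F 2 3 (c.f 2 m), c.f 1 m))) + ent (fun m : Fin N => (c.F 2 3 (c.f 2 m), c.F 3 1 (c.f 3 m), c.f 1 m)) ≤ ent (fun m : Fin N => (c.F 0 1 (c.f 0 m), c.F 2 3 (c.f 2 m), c.F 3 1 (c.f 3 m), c.f 1 m)) + ent (fun m : Fin N => (c.F 0 3 (c.f 0 m), c.F 2 3 (c.f 2 m), c.f 1 m)) := by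
    apply ent_submod
    · intro a b h
      simp only [Prod.mk.injEq] at h
      obtain ⟨hS01, hS23, hS31, hW1⟩ := h
      simp only [Prod.mk.injEq]
      exact ⟨hS23, hS31, hW1⟩
    · intro a b h
      simp only [Prod.mk.injEq] at h
      obtain ⟨hS03, hS23, hW1⟩ := h
      have hS10 : c.F 1 0 (c.f 1 a) = c.F 1 0 (c.f 1 b) := by rw [hW1]
      have hS12 : c.F 1 2 (c.f 1 a) = c.F 1 2 (c.f 1 b) := by rw [hW1]
      have hS13 : c.F 1 3 (c.f 1 a) = c.F 1 3 (c.f 1 b) := by rw [hW1]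
      have hW3 : c.f 3 a = c.f 3 b := by
        apply detW c 3
        intro i hi
        fin_cases i
        · exact hS03
        · exact hS13
        · exact hS23
        · exact absurd rfl hi
      have hS30 : c.F 3 0 (c.f 3 a) = c.F 3 0 (c.f 3 b) := by rw [hW3]
      have hS31 : c.F 3 1 (c.f 3 a) = c.F 3 1 (c.f 3 b) := by rw [hW3]
      have hS32 : c.F 3 2 (c.f 3 a) = c.F 3 2 (c.f 3 b) := by rw [hW3]
      simp only [Prod.mk.injEq]
      exact ⟨hS23, hS31, hW1⟩
  have r14 : ent (fun m : Fin N => (c.F 0 1 (c.f 0 m), c.F 0 3 (c.f 0 m), c.F 2 3 (c.f 2 m), c.f 1 m)) ≤ ent (fun m : Fin N => ((c.F 0 1 (c.f 0 m), c.F 2 3 (c.f 2 m), c.F 3 1 (c.f 3 m), c.f 1 m), (c.F 0 3 (c.f 0 m), c.F 2 3 (c.f 2 m), c.f 1 m))) := by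
    apply ent_le_det
    intro a b h
    simp only [Prod.mk.injEq] at h
    obtain ⟨⟨hS01, hS23, hS31, hW1⟩, ⟨hS03, hS23, hW1⟩⟩ := h
    simp only [Prod.mk.injEq]
    exact ⟨hS01, hS03, hS23, hW1⟩
  have s15 : ent (fun m : Fin N => ((c.F 0 1 (c.f 0 m), c.F 3 1 (c.f 3 m), c.f 2 m), (c.F 0 1 (c.f 0 m), c.F 0 3 (c.f 0 m), c.F 2 3 (c.f 2 m), c.f 1 m))) + ent (fun m : Fin N => (c.F 0 1 (c.f 0 m), c.F 2 3 (c.f 2 m), c.F 3 1 (c.f 3 m), c.f 1 m)) ≤ ent (fun m : Fin N => (c.F 0 1 (c.f 0 m), c.F 3 1 (c.f 3 m), c.f 2 m)) + ent (fun m : Fin N => (c.F 0 1 (c.f 0 m), c.F 0 3 (c.f 0 m), c.F 2 3 (c.f 2 m), c.f 1 m)) := by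
    apply ent_submod
    · intro a b h
      simp only [Prod.mk.injEq] at h
      obtain ⟨hS01, hS31, hW2⟩ := h
      have hS20 : c.F 2 0 (c.f 2 a) = c.F 2 0 (c.f 2 b) := by rw [hW2]
      have hS21 : c.F 2 1 (c.f 2 a) = c.F 2 1 (c.f 2 b) := by rw [hW2]
      have hS23 : c.F 2 3 (c.f 2 a) = c.F 2 3 (c.f 2 b) := by rw [hW2]
      have hW1 : c.f 1 a = c.f 1 b := by
        apply detW c 1
        intro i hi
        fin_cases i
        · exact hS01
        · exact absurd rfl hi
        · exact hS21
        · exact hS31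
      have hS10 : c.F 1 0 (c.f 1 a) = c.F 1 0 (c.f 1 b) := by rw [hW1]
      have hS12 : c.F 1 2 (c.f 1 a) = c.F 1 2 (c.f 1 b) := by rw [hW1]
      have hS13 : c.F 1 3 (c.f 1 a) = c.F 1 3 (c.f 1 b) := by rw [hW1]
      simp only [Prod.mk.injEq]
      exact ⟨hS01, hS23, hS31, hW1⟩
    · intro a b h
      simp only [Prod.mk.injEq] at h
      obtain ⟨hS01, hS03, hS23, hW1⟩ := h
      have hS10 : c.F 1 0 (c.f 1 a) = c.F 1 0 (c.f 1 b) := by rw [hW1]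
      have hS12 : c.F 1 2 (c.f 1 a) = c.F 1 2 (c.f 1 b) := by rw [hW1]
      have hS13 : c.F 1 3 (c.f 1 a) = c.F 1 3 (c.f 1 b) := by rw [hW1]
      have hW3 : c.f 3 a = c.f 3 b := by
        apply detW c 3
        intro i hi
        fin_cases i
        · exact hS03
        · exact hS13
        · exact hS23
        · exact absurd rfl hi
      have hS30 : c.F 3 0 (c.f 3 a) = c.F 3 0 (c.f 3 b) := by rw [hW3]
      have hS31 : c.F 3 1 (c.f 3 a) = c.F 3 1 (c.f 3 b) := by rw [hW3]
      have hS32 : c.F 3 2 (c.f 3 a) = c.F 3 2 (c.f 3 b) := by rw [hW3]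
      simp only [Prod.mk.injEq]
      exact ⟨hS01, hS23, hS31, hW1⟩
  have r15 : Real.log N ≤ ent (fun m : Fin N => ((c.F 0 1 (c.f 0 m), c.F 3 1 (c.f 3 m), c.f 2 m), (c.F 0 1 (c.f 0 m), c.F 0 3 (c.f 0 m), c.F 2 3 (c.f 2 m), c.f 1 m))) := by
    apply logN_le_ent hN
    intro a b h
    simp only [Prod.mk.injEq] at h
    obtain ⟨⟨hS01, hS31, hW2⟩, ⟨hS01, hS03, hS23, hW1⟩⟩ := h
    have hS10 : c.F 1 0 (c.f 1 a) = c.F 1 0 (c.f 1 b) := by rw [hW1]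
    have hS12 : c.F 1 2 (c.f 1 a) = c.F 1 2 (c.f 1 b) := by rw [hW1]
    have hS13 : c.F 1 3 (c.f 1 a) = c.F 1 3 (c.f 1 b) := by rw [hW1]
    have hS20 : c.F 2 0 (c.f 2 a) = c.F 2 0 (c.f 2 b) := by rw [hW2]
    have hS21 : c.F 2 1 (c.f 2 a) = c.F 2 1 (c.f 2 b) := by rw [hW2]
    have hW3 : c.f 3 a = c.f 3 b := by
      apply detW c 3
      intro i hi
      fin_cases i
      · exact hS03
      · exact hS13
      · exact hS23
      · exact absurd rfl hi
    have hS30 : c.F 3 0 (c.f 3 a) = c.F 3 0 (c.f 3 b) := by rw [hW3]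
    have hS32 : c.F 3 2 (c.f 3 a) = c.F 3 2 (c.f 3 b) := by rw [hW3]
    have hab : a = b := rec3 c 1 2 3 (by decide) hW1 hW2 hW3
    exact hab
  have al0 : ent (fun m : Fin N => c.f 0 m) ≤ Real.log Kd := ent_le_log hN hKd _
  have al1 : ent (fun m : Fin N => c.f 1 m) ≤ Real.log Kd := ent_le_log hN hKd _
  have al2 : ent (fun m : Fin N => c.f 2 m) ≤ Real.log Kd := ent_le_log hN hKd _
  have al3 : ent (fun m : Fin N => c.f 3 m) ≤ Real.log Kd := ent_le_log hN hKd _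
  have be01 : ent (fun m : Fin N => c.F 0 1 (c.f 0 m)) ≤ Real.log K := ent_le_log hN hK _
  have be02 : ent (fun m : Fin N => c.F 0 2 (c.f 0 m)) ≤ Real.log K := ent_le_log hN hK _
  have be03 : ent (fun m : Fin N => c.F 0 3 (c.f 0 m)) ≤ Real.log K := ent_le_log hN hK _
  have be21 : ent (fun m : Fin N => c.F 2 1 (c.f 2 m)) ≤ Real.log K := ent_le_log hN hK _
  have be23 : ent (fun m : Fin N => c.F 2 3 (c.f 2 m)) ≤ Real.log K := ent_le_log hN hK _
  have be31 : ent (fun m : Fin N => c.F 3 1 (c.f 3 m)) ≤ Real.log K := ent_le_log hN hK _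
  linarith [s0, r0, s1, r1, s2, r2, s3, r3, s4, r4, s5, r5, s6, r6, s7, r7, s8, r8, s9, r9, s10, r10, s11, r11, s12, r12, s13, r13, s14, r14, s15, r15, al0, al1, al2, al3, be01, be02, be03, be21, be23, be31]

end Code

/-- For every `(N, K_d, K)` exact-repair regenerating code for `(4,3,3)`,
the parameters satisfy `K_d^4 * K^6 ≥ N^3`. -/
theorem statement0 (N Kd K : ℕ) (hN : 0 < N) (hKd : 0 < Kd) (hK : 0 < K)
    (c : ExactRepairCode433 N Kd K) :
    Kd ^ 4 * K ^ 6 ≥ N ^ 3 := by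
  have hlog := main_log hN hKd hK c
  have h1 : Real.log ((N:ℝ)^3) ≤ Real.log ((Kd:ℝ)^4 * (K:ℝ)^6) := by
    rw [Real.log_pow, Real.log_mul (by positivity) (by positivity), Real.log_pow, Real.log_pow]
    push_cast
    linarith
  have h2 : ((N:ℝ))^3 ≤ (Kd:ℝ)^4 * (K:ℝ)^6 := by
    have h3 := Real.exp_le_exp.mpr h1
    rwa [Real.exp_log (by positivity), Real.exp_log (by positivity)] at h3
  exact_mod_cast h2
end

section
/- Let W_1,…,W_4 and S_{i,j} (for distinct i, j ∈ Fin 4) be random variables on a finite probability space satisfying the (4,3,3) exact-repair entropy constraints, and let B denote the joint Shannon entropy of all 16 variables. For any collection A of these variables, the joint entropy of A equals the joint entropy of its growth gr(A); in particular, if gr(A) contains at least three of the variables W_1,…,W_4, then the joint entropy of A equals B. -/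
open MeasureTheory

/-- Shannon entropy (natural log) of a finitely-valued random variable `X`
under the measure `μ`. -/
noncomputable def shEnt {Ω : Type*} [MeasurableSpace Ω] {α : Type*} [Fintype α]
    (μ : Measure Ω) (X : Ω → α) : ℝ :=
  ∑ a : α, Real.negMulLog (μ (X ⁻¹' {a})).toReal

/-- The index type of ordered pairs of distinct indices in `Fin 4`. -/
abbrev DistPair : Type := {p : Fin 4 × Fin 4 // p.1 ≠ p.2}

/-- The joint 16-tuple of all the variables `W_1, …, W_4` and `S_{i,j}`, `i ≠ j`. -/
def fullTuple {Ω α γ : Type*} (W : Fin 4 → Ω → α) (S : Fin 4 → Fin 4 → Ω → γ) :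
    Ω → (Fin 4 → α) × (DistPair → γ) :=
  fun ω => (fun i => W i ω, fun p => S p.1.1 p.1.2 ω)

/-- The `(4,3,3)` exact-repair entropy constraints: (a) any three of the `W_i`
determine the full 16-tuple; (b) each `S_{i,j}` is a deterministic function of
`W_i`; (c) each `W_j` is a deterministic function of `(S_{i,j})_{i ≠ j}`. -/
def RepairConstraints433 {Ω α γ : Type*} (W : Fin 4 → Ω → α)
    (S : Fin 4 → Fin 4 → Ω → γ) : Prop :=
  (∀ i1 i2 i3 : Fin 4, i1 ≠ i2 → i1 ≠ i3 → i2 ≠ i3 →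
    ∃ g : α × α × α → (Fin 4 → α) × (DistPair → γ),
      fullTuple W S = g ∘ (fun ω => (W i1 ω, W i2 ω, W i3 ω))) ∧
  (∀ i j : Fin 4, i ≠ j → ∃ g : α → γ, S i j = g ∘ W i) ∧
  (∀ j : Fin 4, ∃ g : ({i : Fin 4 // i ≠ j} → γ) → α,
      W j = g ∘ (fun ω => fun i : {i : Fin 4 // i ≠ j} => S i.1 j ω))

/-- The collection induces a symmetric entropic vector: permuting the node roles
leaves every joint entropy unchanged. -/
def SymmetricEntropic {Ω α γ : Type*} [MeasurableSpace Ω] [Fintype α] [Fintype γ]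
    (μ : Measure Ω) (W : Fin 4 → Ω → α) (S : Fin 4 → Fin 4 → Ω → γ) : Prop :=
  ∀ (π : Equiv.Perm (Fin 4)) (A : Finset (Fin 4)) (P : Finset DistPair),
    shEnt μ (fun ω =>
      ((fun i : A => W i.1 ω), (fun p : P => S p.1.1.1 p.1.1.2 ω))) =
    shEnt μ (fun ω =>
      ((fun i : A => W (π i.1) ω), (fun p : P => S (π p.1.1.1) (π p.1.1.2) ω)))

/-- The index type of the 16 variables: `Sum.inl i` stands for `W_i` and
`Sum.inr ⟨(i,j), _⟩` stands for `S_{i,j}`. -/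
abbrev VarIdx : Type := Fin 4 ⊕ DistPair

/-- The value of the variable indexed by `v : VarIdx`, embedded in `α ⊕ γ`. -/
def varVal {Ω α γ : Type*} (W : Fin 4 → Ω → α) (S : Fin 4 → Fin 4 → Ω → γ) :
    VarIdx → Ω → α ⊕ γ :=
  Sum.elim (fun i ω => Sum.inl (W i ω)) (fun p ω => Sum.inr (S p.1.1 p.1.2 ω))

/-- A collection `C` of variables is closed under the two growth rules:
if `W_i ∈ C` then `S_{i,j} ∈ C` for all `j ≠ i`; and if `S_{j,i} ∈ C` for all
three `j ≠ i` then `W_i ∈ C`. -/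
def GrowClosed (C : Set VarIdx) : Prop :=
  (∀ (i j : Fin 4) (h : i ≠ j), Sum.inl i ∈ C → Sum.inr ⟨(i, j), h⟩ ∈ C) ∧
  (∀ i : Fin 4, (∀ (j : Fin 4) (h : j ≠ i), Sum.inr ⟨(j, i), h⟩ ∈ C) →
    Sum.inl i ∈ C)

/-- The growth `gr(A)`: the smallest superset of `A` closed under the two
growth rules. -/
def gr (A : Set VarIdx) : Set VarIdx := ⋂₀ {C | A ⊆ C ∧ GrowClosed C}

/-- The joint Shannon entropy of a collection `A` of the 16 variables. -/
noncomputable def collEnt {Ω α γ : Type*} [MeasurableSpace Ω]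
    [Fintype α] [Fintype γ] (μ : Measure Ω)
    (W : Fin 4 → Ω → α) (S : Fin 4 → Fin 4 → Ω → γ) (A : Set VarIdx) : ℝ :=
  letI : Fintype ↥A := A.toFinite.fintype
  shEnt μ (fun ω => fun v : A => varVal W S v.1 ω)

lemma shEnt_pair_right {Ω : Type*} [MeasurableSpace Ω] {α β : Type*} [Fintype α] [Fintype β]
    (μ : Measure Ω) (X : Ω → α) (Y : Ω → β) (g : α → β) (h : Y = g ∘ X) :
    shEnt μ (fun ω => (X ω, Y ω)) = shEnt μ X := by
  classical
  unfold shEnt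
  rw [Fintype.sum_prod_type]
  refine Finset.sum_congr rfl fun a _ => ?_
  rw [Finset.sum_eq_single (g a)]
  · have : (fun ω => (X ω, Y ω)) ⁻¹' {(a, g a)} = X ⁻¹' {a} := by
      ext ω
      simp only [Set.mem_preimage, Set.mem_singleton_iff, Prod.mk.injEq, h, Function.comp]
      constructor
      · exact fun h' => h'.1
      · intro h'; exact ⟨h', by rw [h']⟩
    rw [this]
  · intro b _ hb
    have : (fun ω => (X ω, Y ω)) ⁻¹' {(a, b)} = ∅ := by
      ext ω
      simp only [Set.mem_preimage, Set.mem_singleton_iff, Prod.mk.injEq, h, Function.comp,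
        Set.mem_empty_iff_false, iff_false, not_and]
      intro h'; rw [h']; exact fun hc => hb hc.symm
    rw [this]
    simp [Real.negMulLog]
  · intro h'; exact absurd (Finset.mem_univ _) h'

lemma shEnt_swap {Ω : Type*} [MeasurableSpace Ω] {α β : Type*} [Fintype α] [Fintype β]
    (μ : Measure Ω) (X : Ω → α) (Y : Ω → β) :
    shEnt μ (fun ω => (X ω, Y ω)) = shEnt μ (fun ω => (Y ω, X ω)) := by
  unfold shEnt
  refine Fintype.sum_equiv (Equiv.prodComm α β) _ _ fun p => ?_
  have : (fun ω => (X ω, Y ω)) ⁻¹' {p} = (fun ω => (Y ω, X ω)) ⁻¹' {(Equiv.prodComm α β) p} := by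
    ext ω
    simp [Prod.ext_iff, and_comm]
  rw [this]

lemma shEnt_congr {Ω : Type*} [MeasurableSpace Ω] {α β : Type*} [Fintype α] [Fintype β]
    (μ : Measure Ω) (X : Ω → α) (Y : Ω → β) (g : α → β) (hg : Y = g ∘ X)
    (h : β → α) (hh : X = h ∘ Y) :
    shEnt μ X = shEnt μ Y := by
  rw [← shEnt_pair_right μ X Y g hg, shEnt_swap, shEnt_pair_right μ Y X h hh]

/-- Under the `(4,3,3)` exact-repair entropy constraints, the joint entropy of
any collection `A` of the 16 variables equals the joint entropy of its growth
`gr(A)`; in particular, if `gr(A)` contains at least three of the variables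
`W_1, …, W_4`, then the joint entropy of `A` equals `B`, the joint entropy of
the full 16-tuple. -/
theorem statement6 {Ω α' γ : Type*} [Fintype Ω] [MeasurableSpace Ω]
    [Fintype α'] [Fintype γ]
    (μ : Measure Ω) [IsProbabilityMeasure μ]
    (W : Fin 4 → Ω → α') (S : Fin 4 → Fin 4 → Ω → γ)
    (hCon : RepairConstraints433 W S) (A : Set VarIdx) :
    collEnt μ W S A = collEnt μ W S (gr A) ∧
    ((∃ i1 i2 i3 : Fin 4, i1 ≠ i2 ∧ i1 ≠ i3 ∧ i2 ≠ i3 ∧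
        Sum.inl i1 ∈ gr A ∧ Sum.inl i2 ∈ gr A ∧ Sum.inl i3 ∈ gr A) →
      collEnt μ W S A = shEnt μ (fullTuple W S)) := by
  classical
  have hΩ : Nonempty Ω := by
    by_contra h
    rw [not_nonempty_iff] at h
    have h1 : μ Set.univ = 1 := measure_univ
    rw [Set.univ_eq_empty_iff.2 h] at h1
    simp at h1
  obtain ⟨ω0⟩ := hΩ
  letI instA : Fintype ↥A := A.toFinite.fintype
  letI instG : Fintype ↥(gr A) := (gr A).toFinite.fintype
  set TA : Ω → (↥A → α' ⊕ γ) := fun ω => fun v : A => varVal W S v.1 ω with hTA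
  set TG : Ω → (↥(gr A) → α' ⊕ γ) := fun ω => fun v : gr A => varVal W S v.1 ω with hTG
  set eα : α' ⊕ γ → α' := Sum.elim id (fun _ => W 0 ω0) with heα
  set eγ : α' ⊕ γ → γ := Sum.elim (fun _ => S 0 1 ω0) id with heγ
  set C : Set VarIdx := {v | ∃ g : (↥A → α' ⊕ γ) → α' ⊕ γ, varVal W S v = g ∘ TA} with hC
  have hAC : A ⊆ C := fun v hv => ⟨fun f => f ⟨v, hv⟩, rfl⟩
  have hClosed : GrowClosed C := by
    constructor
    · rintro i j hij ⟨g, hg⟩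
      obtain ⟨g', hg'⟩ := hCon.2.1 i j hij
      refine ⟨(fun x => Sum.inr (g' (eα x))) ∘ g, ?_⟩
      funext ω
      have h1 : Sum.inl (W i ω) = g (TA ω) := congrFun hg ω
      show Sum.inr (S i j ω) = Sum.inr (g' (eα (g (TA ω))))
      rw [← h1, hg']
      simp [heα]
    · intro i hS
      obtain ⟨g, hgi⟩ := hCon.2.2 i
      choose gj hgj using fun (j : {j : Fin 4 // j ≠ i}) => hS j.1 j.2
      refine ⟨fun f => Sum.inl (g (fun j => eγ (gj j f))), ?_⟩
      funext ω
      have hkey : ∀ j : {j : Fin 4 // j ≠ i}, eγ (gj j (TA ω)) = S j.1 i ω := by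
        intro j
        have h3 : gj j (TA ω) = Sum.inr (S j.1 i ω) := (congrFun (hgj j) ω).symm
        rw [h3]
        simp [heγ]
      show Sum.inl (W i ω) = Sum.inl (g (fun j => eγ (gj j (TA ω))))
      have : (fun j : {j : Fin 4 // j ≠ i} => eγ (gj j (TA ω)))
          = fun j => S j.1 i ω := funext hkey
      rw [this, hgi]
      rfl
  have hgrC : gr A ⊆ C := Set.sInter_subset_of_mem ⟨hAC, hClosed⟩
  have hAsub : A ⊆ gr A := fun v hv => Set.mem_sInter.2 fun C' hC' => hC'.1 hv
  have hdet : ∀ v : ↥(gr A), ∃ g : (↥A → α' ⊕ γ) → α' ⊕ γ,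
      varVal W S v.1 = g ∘ TA := fun v => hgrC v.2
  choose G hG using hdet
  have h1 : collEnt μ W S A = collEnt μ W S (gr A) := by
    unfold collEnt
    exact shEnt_congr μ TA TG (fun f v => G v f)
      (by funext ω; funext v; exact congrFun (hG v) ω)
      (fun f v => f ⟨v.1, hAsub v.2⟩) rfl
  refine ⟨h1, ?_⟩
  rintro ⟨i1, i2, i3, h12, h13, h23, m1, m2, m3⟩
  rw [h1]
  obtain ⟨g, hgfull⟩ := hCon.1 i1 i2 i3 h12 h13 h23
  unfold collEnt
  refine shEnt_congr μ TG (fullTuple W S)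
    (fun f => g (eα (f ⟨Sum.inl i1, m1⟩), eα (f ⟨Sum.inl i2, m2⟩), eα (f ⟨Sum.inl i3, m3⟩)))
    ?_
    (fun f v => Sum.elim (fun i => Sum.inl (f.1 i)) (fun p => Sum.inr (f.2 p)) v.1) ?_
  · funext ω
    have h2 := congrFun hgfull ω
    simp only [Function.comp] at h2 ⊢
    rw [h2]
    rfl
  · funext ω
    funext v
    obtain ⟨vv, hv⟩ := v
    cases vv <;> rfl
end

section
/- For (n,k,d)=(4,3,3) exact-repair regenerating codes, the rate region R equals the entropy-symmetrical achievable region R*, i.e., a pair (ᾱ, β̄) is (4,3,3) exact-repair achievable if and only if it is symmetrically (4,3,3) exact-repair achievable. -/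
/-!
Every code can be symmetrized without changing its rates: run 24 independent copies of it in
parallel, the copy indexed by `π ∈ S₄` with the node roles permuted by `π⁻¹`. All alphabet sizes
are raised to the 24th power, so `log K_d / log N` and `log K / log N` are unchanged. Permuting the
nodes of the product code by `σ` only permutes the copies (`π ↦ σ⁻¹ π`); on the message and on
every stored or transmitted symbol this is a bijection, so all joint entropies are preserved.
-/

open MeasureTheory

/-- The uniform probability measure on `Fin N`. -/
noncomputable def unifFin (N : ℕ) : Measure (Fin N) :=
  (N : ENNReal)⁻¹ • Measure.count

/-- A code induces a symmetric entropic vector if, with `W_i = f_i ∘ M` and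
`S_{i,j} = F_{i,j} ∘ W_i` for the uniform message `M` on `Fin N`, every joint
entropy is invariant under permuting the node roles. -/
def InducesSymmetric {N Kd K : ℕ} (c : ExactRepairCode433 N Kd K) : Prop :=
  ∀ (π : Equiv.Perm (Fin 4)) (A : Finset (Fin 4)) (P : Finset DistPair),
    shEnt (unifFin N) (fun m =>
      ((fun i : A => c.f i.1 m),
       (fun p : P => c.F p.1.1.1 p.1.1.2 (c.f p.1.1.1 m)))) =
    shEnt (unifFin N) (fun m =>
      ((fun i : A => c.f (π i.1) m),
       (fun p : P => c.F (π p.1.1.1) (π p.1.1.2) (c.f (π p.1.1.1) m))))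

/-- A normalized pair `(ᾱ, β̄)` is `(4,3,3)` exact-repair achievable. -/
def Achievable433 (α β : ℝ) : Prop :=
  ∀ ε : ℝ, 0 < ε → ∃ (N Kd K : ℕ) (_ : ExactRepairCode433 N Kd K), 2 ≤ N ∧
    α + ε ≥ Real.log Kd / Real.log N ∧ β + ε ≥ Real.log K / Real.log N

/-- A normalized pair `(ᾱ, β̄)` is symmetrically `(4,3,3)` exact-repair
achievable: as above, but with codes inducing symmetric entropic vectors. -/
def SymmAchievable433 (α β : ℝ) : Prop :=
  ∀ ε : ℝ, 0 < ε → ∃ (N Kd K : ℕ) (c : ExactRepairCode433 N Kd K), 2 ≤ N ∧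
    InducesSymmetric c ∧
    α + ε ≥ Real.log Kd / Real.log N ∧ β + ε ≥ Real.log K / Real.log N

lemma shEnt_comp_injective {Ω α β : Type*} [MeasurableSpace Ω] [Fintype α] [Fintype β]
    (μ : Measure Ω) (X : Ω → α) {g : α → β} (hg : g.Injective) :
    shEnt μ (g ∘ X) = shEnt μ X := by
  refine (Fintype.sum_of_injective g hg _ _ (fun b hb => ?_) fun a => ?_).symm
  · have : g ∘ X ⁻¹' {b} = ∅ := Set.eq_empty_of_forall_notMem fun ω h => hb ⟨X ω, h⟩
    simp [this]
  · rw [Set.preimage_comp, ← Set.image_singleton, hg.preimage_image]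

lemma shEnt_comp_of_preimage_eq {Ω α : Type*} [MeasurableSpace Ω] [Fintype α]
    (μ : Measure Ω) (X : Ω → α) {T : Ω → Ω} (hT : ∀ s, μ (T ⁻¹' s) = μ s) :
    shEnt μ (X ∘ T) = shEnt μ X := by
  simp only [shEnt, Set.preimage_comp, hT]

lemma unifFin_preimage_of_bijective {N : ℕ} {T : Fin N → Fin N} (hT : T.Bijective)
    (s : Set (Fin N)) : unifFin N (T ⁻¹' s) = unifFin N s := by
  simp only [unifFin, Measure.smul_apply,
    Measure.count_apply (MeasurableSet.of_discrete), Set.encard_preimage_of_bijective hT]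

/-- A word of the 24-fold product code: one letter for each copy, copies indexed by `S₄`. -/
noncomputable def permWordEquiv (M : ℕ) : (Equiv.Perm (Fin 4) → Fin M) ≃ Fin (M ^ 24) :=
  Fintype.equivFinOfCardEq (by simp [Fintype.card_perm]; rfl)

/-- Reads copy `σ⁻¹ π` of a word in position `π`. -/
noncomputable def permWordShift (M : ℕ) (σ : Equiv.Perm (Fin 4)) : Fin (M ^ 24) ≃ Fin (M ^ 24) :=
  (permWordEquiv M).symm.trans
    ((Equiv.arrowCongr (Equiv.mulLeft σ) (Equiv.refl (Fin M))).trans (permWordEquiv M))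

@[simp]
lemma permWordEquiv_symm_permWordShift (M : ℕ) (σ π : Equiv.Perm (Fin 4)) (x : Fin (M ^ 24)) :
    (permWordEquiv M).symm (permWordShift M σ x) π = (permWordEquiv M).symm x (σ⁻¹ * π) := by
  simp [permWordShift, Equiv.arrowCongr]

namespace ExactRepairCode433

variable {N Kd K : ℕ}

lemma inducesSymmetric_of_equivariant (c : ExactRepairCode433 N Kd K)
    (h : ∀ σ : Equiv.Perm (Fin 4), ∃ (T : Fin N ≃ Fin N) (u : Fin Kd ≃ Fin Kd) (v : Fin K ≃ Fin K),
      (∀ i m, c.f (σ i) (T m) = u (c.f i m)) ∧ ∀ i j x, c.F (σ i) (σ j) (u x) = v (c.F i j x)) :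
    InducesSymmetric c := by
  intro σ A P
  obtain ⟨T, u, v, hf, hF⟩ := h σ
  set X := fun m => ((fun i : A => c.f i.1 m),
    (fun p : P => c.F p.1.1.1 p.1.1.2 (c.f p.1.1.1 m)))
  set Y := fun m => ((fun i : A => c.f (σ i.1) m),
    (fun p : P => c.F (σ p.1.1.1) (σ p.1.1.2) (c.f (σ p.1.1.1) m)))
  let g := (Equiv.arrowCongr (Equiv.refl A) u).prodCongr (Equiv.arrowCongr (Equiv.refl P) v)
  have hYT : Y ∘ T = g ∘ X := by
    funext m
    ext p <;> simp [X, Y, g, hf, hF]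
  rw [← shEnt_comp_of_preimage_eq _ Y (unifFin_preimage_of_bijective T.bijective), hYT,
    shEnt_comp_injective _ _ g.injective]

noncomputable def symmetrize (c : ExactRepairCode433 N Kd K) :
    ExactRepairCode433 (N ^ 24) (Kd ^ 24) (K ^ 24) where
  f i m := permWordEquiv Kd fun π => c.f (π⁻¹ i) ((permWordEquiv N).symm m π)
  F i j x := permWordEquiv K fun π => c.F (π⁻¹ i) (π⁻¹ j) ((permWordEquiv Kd).symm x π)
  G j s := permWordEquiv Kd fun π => c.G (π⁻¹ j) fun i =>
    (permWordEquiv K).symm (s ⟨π i.1, fun h => i.2 (Equiv.Perm.eq_inv_iff_eq.mpr h)⟩) π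
  reconstruct A hA m m' h := by
    apply (permWordEquiv N).symm.injective
    funext π
    refine c.reconstruct (A.image ⇑π⁻¹)
      (by rw [Finset.card_image_of_injective _ (π⁻¹).injective, hA])
      (funext fun ⟨b, hb⟩ => ?_)
    obtain ⟨i, hi, rfl⟩ := Finset.mem_image.mp hb
    simpa using congrFun ((permWordEquiv Kd).injective (congrFun h ⟨i, hi⟩)) π
  repair j m := by
    refine congrArg _ (funext fun π => ?_)
    simpa using c.repair (π⁻¹ j) ((permWordEquiv N).symm m π)

lemma symmetrize_f_perm (c : ExactRepairCode433 N Kd K) (σ : Equiv.Perm (Fin 4)) (i : Fin 4)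
    (m : Fin (N ^ 24)) :
    c.symmetrize.f (σ i) (permWordShift N σ m) = permWordShift Kd σ (c.symmetrize.f i m) := by
  apply (permWordEquiv Kd).symm.injective
  funext π
  simp [symmetrize, Equiv.Perm.inv_def, Equiv.Perm.mul_def]

lemma symmetrize_F_perm (c : ExactRepairCode433 N Kd K) (σ : Equiv.Perm (Fin 4)) (i j : Fin 4)
    (x : Fin (Kd ^ 24)) :
    c.symmetrize.F (σ i) (σ j) (permWordShift Kd σ x) =
      permWordShift K σ (c.symmetrize.F i j x) := by
  apply (permWordEquiv K).symm.injective
  funext π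
  simp [symmetrize, Equiv.Perm.inv_def, Equiv.Perm.mul_def]

lemma inducesSymmetric_symmetrize (c : ExactRepairCode433 N Kd K) :
    InducesSymmetric c.symmetrize :=
  c.symmetrize.inducesSymmetric_of_equivariant fun σ =>
    ⟨permWordShift N σ, permWordShift Kd σ, permWordShift K σ,
      c.symmetrize_f_perm σ, c.symmetrize_F_perm σ⟩

end ExactRepairCode433

lemma log_pow_div_log_pow (a b n : ℕ) (hn : n ≠ 0) :
    Real.log ((a ^ n : ℕ) : ℝ) / Real.log ((b ^ n : ℕ) : ℝ) = Real.log a / Real.log b := by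
  push_cast
  rw [Real.log_pow, Real.log_pow, mul_div_mul_left _ _ (by exact_mod_cast hn)]

/-- For `(4,3,3)` exact-repair regenerating codes the rate region equals the
entropy-symmetrical achievable region: `(ᾱ, β̄)` is achievable iff it is
symmetrically achievable. -/
theorem statement7 (α β : ℝ) :
    Achievable433 α β ↔ SymmAchievable433 α β := by
  constructor
  · intro h ε hε
    obtain ⟨N, Kd, K, c, hN, hα, hβ⟩ := h ε hε
    refine ⟨N ^ 24, Kd ^ 24, K ^ 24, c.symmetrize, hN.trans (Nat.le_self_pow (by norm_num) N),
      c.inducesSymmetric_symmetrize, ?_, ?_⟩ <;> rwa [log_pow_div_log_pow _ _ _ (by norm_num)]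
  · intro h ε hε
    obtain ⟨N, Kd, K, c, hN, -, hα, hβ⟩ := h ε hε
    exact ⟨N, Kd, K, c, hN, hα, hβ⟩
end

section
/- Consider the binary encoding that maps a message (x1, x2, y1, y2, z1, z2, t1, t2) ∈ (ZMod 2)^8 to node contents n1 = (x1, x2, y1+z2+t1+t2), n2 = (y1, y2, z1+t2+x1+x2), n3 = (z1, z2, t1+x2+y1+y2), n4 = (t1, t2, x1+y2+z1+z2) in (ZMod 2)^3. There exist functions g2, g3, g4 : (ZMod 2)^3 → (ZMod 2)^2 and a function h : ((ZMod 2)^2)^3 → (ZMod 2)^3 such that for every message, h(g2(n2), g3(n3), g4(n4)) = n1; moreover one may take g2(n2) = (y1, z1+t2+x1+x2+y1+y2), g3(n3) = (z2, t1+x2+y1+y2+z1+z2), g4(n4) = (t1+t2, x1+y2+z1+z2+t2), each of which is a function of the respective node's stored content alone. -/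
/-- The message space: eight bits `(x1, x2, y1, y2, z1, z2, t1, t2)` over the
binary field. -/
abbrev Msg : Type :=
  ZMod 2 × ZMod 2 × ZMod 2 × ZMod 2 × ZMod 2 × ZMod 2 × ZMod 2 × ZMod 2

/-- The content of a node: three bits. -/
abbrev NodeContent : Type := ZMod 2 × ZMod 2 × ZMod 2

/-- The binary encoding of Table I: node contents
`n1 = (x1, x2, y1+z2+t1+t2)`, `n2 = (y1, y2, z1+t2+x1+x2)`,
`n3 = (z1, z2, t1+x2+y1+y2)`, `n4 = (t1, t2, x1+y2+z1+z2)`. -/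
def node : Fin 4 → Msg → NodeContent
  | 0, (x1, x2, y1, _y2, _z1, z2, t1, t2) => (x1, x2, y1 + z2 + t1 + t2)
  | 1, (x1, x2, y1, y2, z1, _z2, _t1, t2) => (y1, y2, z1 + t2 + x1 + x2)
  | 2, (_x1, x2, y1, y2, z1, z2, t1, _t2) => (z1, z2, t1 + x2 + y1 + y2)
  | 3, (x1, _x2, _y1, y2, z1, z2, t1, t2) => (t1, t2, x1 + y2 + z1 + z2)

/-- The two bits node 2 transmits to repair node 1: with stored content
`n2 = (y1, y2, z1+t2+x1+x2)`, transmit `(y1, z1+t2+x1+x2+y1+y2)`. -/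
def g2 : NodeContent → ZMod 2 × ZMod 2 := fun (a, b, c) => (a, c + a + b)

/-- The two bits node 3 transmits to repair node 1: with stored content
`n3 = (z1, z2, t1+x2+y1+y2)`, transmit `(z2, t1+x2+y1+y2+z1+z2)`. -/
def g3 : NodeContent → ZMod 2 × ZMod 2 := fun (a, b, c) => (b, c + a + b)

/-- The two bits node 4 transmits to repair node 1: with stored content
`n4 = (t1, t2, x1+y2+z1+z2)`, transmit `(t1+t2, x1+y2+z1+z2+t2)`. -/
def g4 : NodeContent → ZMod 2 × ZMod 2 := fun (a, b, c) => (a + b, c + b)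

/- Node 1 is recovered by summing received bits: in each sum every message bit other than
the wanted ones occurs exactly twice, hence cancels in characteristic 2. -/
def repairDecoder :
    (ZMod 2 × ZMod 2) × (ZMod 2 × ZMod 2) × (ZMod 2 × ZMod 2) → NodeContent :=
  fun ((a1, a2), (b1, b2), (c1, c2)) => (a2 + b2 + b1 + c1, a2 + c2 + a1 + b1, a1 + b1 + c1)

theorem repairDecoder_recovers_node_zero (m : Msg) :
    repairDecoder (g2 (node 1 m), g3 (node 2 m), g4 (node 3 m)) = node 0 m := by
  obtain ⟨x1, x2, y1, y2, z1, z2, t1, t2⟩ := m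
  have two_eq_zero : (2 : ZMod 2) = 0 := rfl
  simp only [node, g2, g3, g4, repairDecoder, Prod.mk.injEq]
  refine ⟨?_, ?_, by ring⟩
  · linear_combination (x2 + y1 + y2 + z1 + z2 + t1 + t2) * two_eq_zero
  · linear_combination (x1 + y1 + y2 + z1 + z2 + t2) * two_eq_zero

/-- Exact repair of node 1: there exist repair-encoding functions
`g2', g3', g4'` (each a function of the respective node's stored content alone)
and a repair-decoding function `h` recovering node 1's content; moreover one
may take `g2', g3', g4'` to be the particular maps `g2, g3, g4` above. -/
theorem statement11 :
    (∃ (g2' g3' g4' : NodeContent → ZMod 2 × ZMod 2)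
        (h : (ZMod 2 × ZMod 2) × (ZMod 2 × ZMod 2) × (ZMod 2 × ZMod 2) →
          NodeContent),
        ∀ m : Msg, h (g2' (node 1 m), g3' (node 2 m), g4' (node 3 m)) =
          node 0 m) ∧
    (∃ h : (ZMod 2 × ZMod 2) × (ZMod 2 × ZMod 2) × (ZMod 2 × ZMod 2) →
        NodeContent,
        ∀ m : Msg, h (g2 (node 1 m), g3 (node 2 m), g4 (node 3 m)) =
          node 0 m) :=
  ⟨⟨g2, g3, g4, repairDecoder, repairDecoder_recovers_node_zero⟩,
    ⟨repairDecoder, repairDecoder_recovers_node_zero⟩⟩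
end

section
/- For every (N, K_d, K) exact-repair regenerating code for (n,k,d)=(4,3,3), the message is determined by the contents of two nodes together with one repair message; consequently N ≤ K_d^2 · K. -/
/-- For every `(N, K_d, K)` exact-repair regenerating code for `(4,3,3)`, the
message is determined by the contents of nodes 1 and 2 together with the repair
message from node 4 to node 3 (zero-based: nodes `0`, `1` and `F 3 2`);
consequently `N ≤ K_d^2 · K`. -/
theorem statement14 (N Kd K : ℕ) (hN : 0 < N) (hKd : 0 < Kd) (hK : 0 < K)
    (c : ExactRepairCode433 N Kd K) :
    Function.Injective
        (fun m : Fin N => (c.f 0 m, c.f 1 m, c.F 3 2 (c.f 3 m))) ∧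
      N ≤ Kd ^ 2 * K := by
  have hinj : Function.Injective
      (fun m : Fin N => (c.f 0 m, c.f 1 m, c.F 3 2 (c.f 3 m))) := by
    intro a b h
    simp only [Prod.mk.injEq] at h
    obtain ⟨h0, h1, h3⟩ := h
    -- repair node 2
    have h2 : c.f 2 a = c.f 2 b := by
      rw [← c.repair 2 a, ← c.repair 2 b]
      congr 1
      funext i
      obtain ⟨i, hi⟩ := i
      fin_cases i
      · simpa using congrArg (c.F 0 2) h0
      · simpa using congrArg (c.F 1 2) h1
      · exact absurd rfl hi
      · simpa using h3
    apply c.reconstruct {0, 1, 2} (by decide)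
    funext i
    obtain ⟨i, hi⟩ := i
    fin_cases i
    · exact h0
    · exact h1
    · exact h2
    · exact absurd hi (by decide)
  refine ⟨hinj, ?_⟩
  calc N = Fintype.card (Fin N) := (Fintype.card_fin N).symm
    _ ≤ Fintype.card (Fin Kd × Fin Kd × Fin K) := Fintype.card_le_of_injective _ hinj
    _ = Kd ^ 2 * K := by simp [Fintype.card_prod, sq, Nat.mul_assoc]
end

section
/- For every (N, K_d, K) exact-repair regenerating code for (n,k,d)=(4,3,3), the message is determined by six repair messages; consequently N ≤ K^6. Concretely, the map m ↦ (S_{2,1}, S_{3,1}, S_{4,1}, S_{3,2}, S_{4,2}, S_{4,3})(m), where S_{i,j}(m) = F_{i,j}(f_i(m)), is injective. -/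
/-- For every `(N, K_d, K)` exact-repair regenerating code for `(4,3,3)`, the
message is determined by the six repair messages
`S_{2,1}, S_{3,1}, S_{4,1}, S_{3,2}, S_{4,2}, S_{4,3}` (zero-based pairs
`(1,0), (2,0), (3,0), (2,1), (3,1), (3,2)`), where `S_{i,j}(m) = F_{i,j}(f_i(m))`;
consequently `N ≤ K^6`. -/
theorem statement15 (N Kd K : ℕ) (hN : 0 < N) (hKd : 0 < Kd) (hK : 0 < K)
    (c : ExactRepairCode433 N Kd K) :
    Function.Injective
        (fun m : Fin N =>
          (c.F 1 0 (c.f 1 m), c.F 2 0 (c.f 2 m), c.F 3 0 (c.f 3 m),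
           c.F 2 1 (c.f 2 m), c.F 3 1 (c.f 3 m), c.F 3 2 (c.f 3 m))) ∧
      N ≤ K ^ 6 := by
  have hinj : Function.Injective
      (fun m : Fin N =>
        (c.F 1 0 (c.f 1 m), c.F 2 0 (c.f 2 m), c.F 3 0 (c.f 3 m),
         c.F 2 1 (c.f 2 m), c.F 3 1 (c.f 3 m), c.F 3 2 (c.f 3 m))) := by
    intro m m' h
    simp only [Prod.mk.injEq] at h
    obtain ⟨h10, h20, h30, h21, h31, h32⟩ := h
    have h0 : c.f 0 m = c.f 0 m' := by
      rw [← c.repair 0 m, ← c.repair 0 m']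
      congr 1
      funext i
      fin_cases i <;> simp_all
    have h1 : c.f 1 m = c.f 1 m' := by
      rw [← c.repair 1 m, ← c.repair 1 m']
      congr 1
      funext i
      fin_cases i <;> simp_all
    have h2 : c.f 2 m = c.f 2 m' := by
      rw [← c.repair 2 m, ← c.repair 2 m']
      congr 1
      funext i
      fin_cases i <;> simp_all
    apply c.reconstruct {0, 1, 2} (by decide)
    funext i
    fin_cases i <;> simp_all
  refine ⟨hinj, ?_⟩
  have hle := Fintype.card_le_of_injective _ hinj
  simpa [Fintype.card_prod, pow_succ, mul_assoc] using hle
end
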